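/- Let L_MAJ = {x ∈ {0,1}* : x has more 1's than 0's, or x has an equal number of 0's and 1's and x begins with 1}. Then the right quotient L_MAJ{0}^{-1} = {x : x0 ∈ L_MAJ} is not counting-regular, and the left quotient {0}^{-1}(L_MAJ^R) = {x : 0x ∈ L_MAJ^R} is not counting-regular, even though L_MAJ (and hence L_MAJ^R) is counting-regular. Thus the counting-regular languages are not closed under right quotient or left quotient with a single symbol. -/

import Mathlib

/-- The counting function of a language: the number of words of length `n`. -/
noncomputable def countFn {α : Type*} (L : Set (List α)) (n : ℕ) : ℕ :=
  Set.ncard {w | w ∈ L ∧ w.length = n}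

/-- A language is regular if it is accepted by a DFA with finitely many states. -/
def IsRegularLang {α : Type*} (L : Set (List α)) : Prop :=
  ∃ (σ : Type) (_ : Fintype σ) (M : DFA α σ), ∀ w, w ∈ M.accepts ↔ w ∈ L

/-- A language is counting-regular if some regular language over a (possibly different)
finite alphabet has the same counting function. -/
def CountingRegular {α : Type*} (L : Set (List α)) : Prop :=
  ∃ (β : Type) (_ : Fintype β) (L' : Set (List β)),
    IsRegularLang L' ∧ ∀ n, countFn L' n = countFn L n


/-- `L_MAJ`: words over `{0,1}` with more 1's than 0's, or equally many and starting with 1. -/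
def LMAJ : Set (List (Fin 2)) :=
  {x | x.count 0 < x.count 1 ∨ (x.count 0 = x.count 1 ∧ x.head? = some 1)}

/-- The reversal `L_MAJ^R`. -/
def LMAJrev : Set (List (Fin 2)) := {w | ∃ v ∈ LMAJ, w = v.reverse}

/-!
Complementing every letter is a length-preserving involution which, on nonempty words, exchanges
`L_MAJ` with its complement; the same holds for the regular language `1{0,1}*`. Hence both have
`2^(n-1)` words of each length `n ≥ 1`, and reversal does not change counting functions.

For a DFA, the numbers of accepted words of length `n` read from each state, taken mod 2, evolve
under one fixed map of a finite set, so the counting function of a regular language is eventually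
periodic mod 2. On the other side `L_MAJ{0}⁻¹ ⊆ L_MAJ`, and the words of length `2i+1` (resp.
`2i+2`) in the difference are counted by `C(2i, i+1)` (resp. `C(2i+1, i)`). With Lucas' theorem
this shows that, for `m ≥ 3`, `L_MAJ{0}⁻¹` has an odd number of words of length `m` exactly when
`⌈m/2⌉` is a power of two, which is not eventually periodic. Finally `{0}⁻¹(L_MAJ^R)` is the
reversal of `L_MAJ{0}⁻¹`.
-/

open Function

section Counting

variable {α : Type*}

theorem countFn_congr {L L' : Set (List α)} {n : ℕ}
    (h : ∀ w, w.length = n → (w ∈ L ↔ w ∈ L')) : countFn L n = countFn L' n := by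
  unfold countFn
  congr 1
  ext w
  exact ⟨fun ⟨hw, hn⟩ => ⟨(h w hn).1 hw, hn⟩, fun ⟨hw, hn⟩ => ⟨(h w hn).2 hw, hn⟩⟩

theorem countFn_eq_zero {L : Set (List α)} {n : ℕ} (h : ∀ w, w.length = n → w ∉ L) :
    countFn L n = 0 := by
  have hempty : {w | w ∈ L ∧ w.length = n} = ∅ :=
    Set.eq_empty_of_forall_notMem fun w hw => h w hw.2 hw.1
  rw [countFn, hempty, Set.ncard_empty]

theorem countFn_image {f : List α → List α} (hf : Injective f)
    (hlen : ∀ w, (f w).length = w.length) (L : Set (List α)) (n : ℕ) :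
    countFn (f '' L) n = countFn L n := by
  rw [countFn, countFn, ← Set.ncard_image_of_injective {w | w ∈ L ∧ w.length = n} hf]
  congr 1
  ext w
  constructor
  · rintro ⟨⟨v, hv, rfl⟩, hn⟩
    exact ⟨v, ⟨hv, by rwa [hlen] at hn⟩, rfl⟩
  · rintro ⟨v, ⟨hv, hn⟩, rfl⟩
    exact ⟨⟨v, hv, rfl⟩, by rw [hlen, hn]⟩

variable [Fintype α]

open Classical in
theorem countFn_eq_sum (L : Set (List α)) (n : ℕ) :
    countFn L n = ∑ v : Fin n → α, if List.ofFn v ∈ L then 1 else 0 := by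
  have hrange : {w | w ∈ L ∧ w.length = n} = List.ofFn '' {v : Fin n → α | List.ofFn v ∈ L} := by
    ext w
    constructor
    · rintro ⟨hw, rfl⟩
      exact ⟨w.get, by rwa [Set.mem_ofPred_eq, List.ofFn_get], List.ofFn_get w⟩
    · rintro ⟨v, hv, rfl⟩
      exact ⟨hv, List.length_ofFn⟩
  rw [countFn, hrange, Set.ncard_image_of_injective _ List.ofFn_injective,
    Set.ncard_eq_toFinset_card', Set.toFinset_ofPred, Finset.card_filter]

open Classical in
theorem countFn_zero (L : Set (List α)) : countFn L 0 = if [] ∈ L then 1 else 0 := by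
  simp [countFn_eq_sum]

theorem countFn_succ (L : Set (List α)) (n : ℕ) :
    countFn L (n + 1) = ∑ a : α, countFn {w | a :: w ∈ L} n := by
  classical
  simp only [countFn_eq_sum]
  rw [← (Fin.consEquiv fun _ => α).sum_comp, Fintype.sum_prod_type]
  simp [Fin.consEquiv]

theorem countFn_univ (n : ℕ) : countFn (Set.univ : Set (List α)) n = Fintype.card α ^ n := by
  classical
  simp [countFn_eq_sum]

theorem countFn_inter_add_countFn_diff (L L' : Set (List α)) (n : ℕ) :
    countFn (L ∩ L') n + countFn (L \ L') n = countFn L n := by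
  classical
  simp only [countFn_eq_sum, ← Finset.sum_add_distrib]
  refine Finset.sum_congr rfl fun v _ => ?_
  by_cases h : List.ofFn v ∈ L' <;> simp [h]

theorem countFn_add_countFn_compl (L : Set (List α)) (n : ℕ) :
    countFn L n + countFn Lᶜ n = Fintype.card α ^ n := by
  rw [Set.compl_eq_univ_sdiff, ← countFn_univ, ← countFn_inter_add_countFn_diff Set.univ L n,
    Set.univ_inter]

theorem two_mul_countFn_of_involutive {f : List α → List α} (hf : Involutive f)
    (hlen : ∀ w, (f w).length = w.length) {L : Set (List α)} {n : ℕ}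
    (hL : ∀ w, w.length = n → (f w ∈ L ↔ w ∉ L)) :
    2 * countFn L n = Fintype.card α ^ n := by
  have hcompl : countFn Lᶜ n = countFn L n := by
    rw [← countFn_image hf.injective hlen L n,
      Set.image_eq_preimage_of_inverse hf.leftInverse hf.rightInverse]
    exact countFn_congr fun w hw => (hL w hw).symm
  rw [← countFn_add_countFn_compl L n, hcompl, two_mul]

end Counting

theorem Function.exists_iterate_add_eq_of_finite {β : Type*} [Finite β] (f : β → β) (x : β) :
    ∃ N p, 0 < p ∧ ∀ n, N ≤ n → f^[n + p] x = f^[n] x := by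
  obtain ⟨i, j, hij, hne⟩ : ∃ i j, f^[i] x = f^[j] x ∧ i ≠ j := by
    simpa [Injective] using not_injective_infinite_finite (f^[·] x)
  wlog hlt : i < j generalizing i j
  · exact this j i hij.symm hne.symm (by omega)
  refine ⟨i, j - i, by omega, fun n hn => ?_⟩
  rw [show n + (j - i) = (n - i) + j by omega, iterate_add_apply, ← hij, ← iterate_add_apply,
    Nat.sub_add_cancel hn]

theorem IsRegularLang.exists_countFn_periodic_mod {α : Type*} [Fintype α] {L : Set (List α)}
    (hL : IsRegularLang L) (q : ℕ) [NeZero q] :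
    ∃ N p, 0 < p ∧ ∀ n, N ≤ n → (countFn L (n + p) : ZMod q) = countFn L n := by
  obtain ⟨σ, _, M, hM⟩ := hL
  let V : ℕ → σ → ZMod q := fun n s => countFn {w | M.evalFrom s w ∈ M.accept} n
  let T : (σ → ZMod q) → σ → ZMod q := fun v s => ∑ a, v (M.step s a)
  have hV : ∀ n, V n = T^[n] (V 0) := by
    intro n
    induction n with
    | zero => rfl
    | succ n ih =>
      rw [iterate_succ_apply', ← ih]
      funext s
      simp only [V, T, countFn_succ, Nat.cast_sum]
      rfl
  have hL : ∀ n, countFn L n = countFn {w | M.evalFrom M.start w ∈ M.accept} n :=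
    fun n => countFn_congr fun w _ => (hM w).symm
  obtain ⟨N, p, hp, hper⟩ := exists_iterate_add_eq_of_finite T (V 0)
  refine ⟨N, p, hp, fun n hn => ?_⟩
  have hstart := congrFun (hper n hn) M.start
  rw [← hV, ← hV] at hstart
  rwa [hL, hL]

theorem countingRegular_congr {α β : Type*} {L : Set (List α)} {L' : Set (List β)}
    (h : ∀ n, countFn L n = countFn L' n) : CountingRegular L ↔ CountingRegular L' :=
  ⟨fun ⟨γ, hγ, K, hK, hc⟩ => ⟨γ, hγ, K, hK, fun n => (hc n).trans (h n)⟩,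
    fun ⟨γ, hγ, K, hK, hc⟩ => ⟨γ, hγ, K, hK, fun n => (hc n).trans (h n).symm⟩⟩

theorem countingRegular_image_reverse {α : Type*} {L : Set (List α)} :
    CountingRegular (List.reverse '' L) ↔ CountingRegular L :=
  countingRegular_congr <|
    countFn_image List.reverse_injective (fun _ => List.length_reverse) L

def headDFA {α : Type*} [DecidableEq α] (a : α) : DFA α (Option Bool) where
  step s b := s.or (some (b = a))
  start := none
  accept := {some true}

theorem isRegularLang_head?_eq {α : Type} [DecidableEq α] (a : α) :
    IsRegularLang {w : List α | w.head? = some a} := by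
  have hsink : ∀ (b : Bool) (w : List α), (headDFA a).evalFrom (some b) w = some b := by
    intro b w
    induction w with
    | nil => rfl
    | cons c w ih => exact ih
  refine ⟨Option Bool, inferInstance, headDFA a, fun w => ?_⟩
  cases w with
  | nil => simp [DFA.mem_accepts, DFA.eval, headDFA]
  | cons b w =>
    rw [DFA.mem_accepts, DFA.eval, DFA.evalFrom_cons]
    change (headDFA a).evalFrom (some (decide (b = a))) w ∈ {some true} ↔ _
    simp [hsink]

def rightQuotient {α : Type*} (L : Set (List α)) (u : List α) : Set (List α) := {x | x ++ u ∈ L}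

def leftQuotient {α : Type*} (L : Set (List α)) (u : List α) : Set (List α) := {x | u ++ x ∈ L}

theorem leftQuotient_image_reverse {α : Type*} (L : Set (List α)) (u : List α) :
    leftQuotient (List.reverse '' L) u = List.reverse '' rightQuotient L u.reverse := by
  have h := Set.image_eq_preimage_of_inverse (f := @List.reverse α)
    List.reverse_involutive.leftInverse List.reverse_involutive.rightInverse
  ext x
  simp [h, leftQuotient, rightQuotient]

theorem countingRegular_leftQuotient_image_reverse_iff {α : Type*} (L : Set (List α))
    (u : List α) :
    CountingRegular (leftQuotient (List.reverse '' L) u) ↔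
      CountingRegular (rightQuotient L u.reverse) := by
  rw [leftQuotient_image_reverse, countingRegular_image_reverse]

theorem List.count_map_finRev {n : ℕ} (w : List (Fin n)) (a : Fin n) :
    (w.map Fin.rev).count a = w.count a.rev := by
  rw [← List.count_map_of_injective w Fin.rev Fin.rev_injective a.rev, Fin.rev_rev]

theorem List.count_zero_add_count_one (w : List (Fin 2)) : w.count 0 + w.count 1 = w.length := by
  induction w with
  | nil => rfl
  | cons a w ih => fin_cases a <;> simp <;> omega

theorem countFn_count_one (n k : ℕ) :
    countFn {w : List (Fin 2) | w.count 1 = k} n = n.choose k := by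
  induction n generalizing k with
  | zero => cases k <;> simp [countFn_zero]
  | succ n ih =>
    rw [countFn_succ, Fin.sum_univ_two]
    cases k with
    | zero => simp [ih, countFn_eq_zero]
    | succ k => simpa [ih, Nat.choose_succ_succ] using add_comm _ _

theorem map_rev_mem_LMAJ_iff {w : List (Fin 2)} (hw : w ≠ []) :
    w.map Fin.rev ∈ LMAJ ↔ w ∉ LMAJ := by
  obtain ⟨b, t, rfl⟩ := List.exists_cons_of_ne_nil hw
  simp only [LMAJ, Set.mem_ofPred_eq, List.map_cons, List.count_cons, List.count_map_finRev,
    List.head?_cons, Option.some.injEq]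
  fin_cases b <;> simp <;> omega

theorem two_mul_countFn_LMAJ (n : ℕ) : 2 * countFn LMAJ (n + 1) = 2 ^ (n + 1) := by
  simpa using two_mul_countFn_of_involutive Fin.rev_involutive.list_map
    (fun _ => List.length_map _) fun w hw =>
      map_rev_mem_LMAJ_iff (List.ne_nil_of_length_eq_add_one hw)

theorem two_mul_countFn_head?_eq_one (n : ℕ) :
    2 * countFn {w : List (Fin 2) | w.head? = some 1} (n + 1) = 2 ^ (n + 1) := by
  refine (two_mul_countFn_of_involutive Fin.rev_involutive.list_map
    (fun _ => List.length_map _) fun w hw => ?_).trans (by simp)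
  obtain ⟨b, t, rfl⟩ := List.exists_cons_of_ne_nil (List.ne_nil_of_length_eq_add_one hw)
  fin_cases b <;> simp

theorem countFn_head?_eq_one_eq_countFn_LMAJ (n : ℕ) :
    countFn {w : List (Fin 2) | w.head? = some 1} n = countFn LMAJ n := by
  cases n with
  | zero => simp [countFn_zero, LMAJ]
  | succ n =>
    exact Nat.eq_of_mul_eq_mul_left two_pos
      ((two_mul_countFn_head?_eq_one n).trans (two_mul_countFn_LMAJ n).symm)

theorem countingRegular_LMAJ : CountingRegular LMAJ :=
  ⟨Fin 2, inferInstance, _, isRegularLang_head?_eq 1, countFn_head?_eq_one_eq_countFn_LMAJ⟩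

theorem LMAJrev_eq_image_reverse : LMAJrev = List.reverse '' LMAJ := by
  ext w
  simp [LMAJrev, eq_comm]

theorem choose_mod_two (n k : ℕ) :
    n.choose k % 2 = (n % 2).choose (k % 2) * (n / 2).choose (k / 2) % 2 :=
  Choose.choose_modEq_choose_mod_mul_choose_div_nat

theorem isPowerOfTwo_two_mul_iff {n : ℕ} : (2 * n).isPowerOfTwo ↔ n.isPowerOfTwo := by
  constructor
  · rintro ⟨k, hk⟩
    cases k with
    | zero => omega
    | succ k => exact ⟨k, by rw [pow_succ] at hk; omega⟩
  · rintro ⟨k, rfl⟩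
    exact ⟨k + 1, by rw [pow_succ, mul_comm]⟩

theorem odd_choose_two_mul_add_one_iff (i : ℕ) :
    Odd ((2 * i + 1).choose i) ↔ (i + 1).isPowerOfTwo := by
  induction i using Nat.strong_induction_on with
  | _ i ih =>
    rw [Nat.odd_iff, choose_mod_two]
    obtain ⟨l, rfl | rfl⟩ := Nat.even_or_odd' i
    · rw [show (2 * (2 * l) + 1) % 2 = 1 by omega, show 2 * l % 2 = 0 by omega,
        show (2 * (2 * l) + 1) / 2 = 2 * l by omega, show 2 * l / 2 = l by omega,
        Nat.choose_zero_right, one_mul]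
      rcases Nat.eq_zero_or_pos l with rfl | hl
      · exact iff_of_true rfl ⟨0, rfl⟩
      · have hcentral := Nat.two_dvd_centralBinom_of_one_le hl
        rw [Nat.centralBinom_eq_two_mul_choose] at hcentral
        refine iff_of_false (by omega) ?_
        rintro ⟨k, hk⟩
        cases k with
        | zero => omega
        | succ k => rw [pow_succ] at hk; omega
    · rw [show (2 * (2 * l + 1) + 1) % 2 = 1 by omega, show (2 * l + 1) % 2 = 1 by omega,
        show (2 * (2 * l + 1) + 1) / 2 = 2 * l + 1 by omega, show (2 * l + 1) / 2 = l by omega,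
        Nat.choose_self, one_mul, show 2 * l + 1 + 1 = 2 * (l + 1) by ring,
        isPowerOfTwo_two_mul_iff, ← ih l (by omega), Nat.odd_iff]

theorem not_isPowerOfTwo_of_lt_of_lt {k n : ℕ} (h₁ : 2 ^ k < n) (h₂ : n < 2 ^ (k + 1)) :
    ¬ n.isPowerOfTwo := by
  rintro ⟨t, rfl⟩
  rw [Nat.pow_lt_pow_iff_right one_lt_two] at h₁ h₂
  omega

theorem mem_rightQuotient_LMAJ_zero_iff {x : List (Fin 2)} :
    x ∈ rightQuotient LMAJ [0] ↔
      x.count 0 + 1 < x.count 1 ∨ (x.count 0 + 1 = x.count 1 ∧ x.head? = some 1) := by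
  cases x <;> simp [rightQuotient, LMAJ]

theorem rightQuotient_LMAJ_zero_subset : rightQuotient LMAJ [0] ⊆ LMAJ := by
  intro x hx
  rw [mem_rightQuotient_LMAJ_zero_iff] at hx
  simp only [LMAJ, Set.mem_ofPred_eq]
  omega

theorem cons_zero_mem_LMAJ_diff_iff (y : List (Fin 2)) :
    0 :: y ∈ LMAJ \ rightQuotient LMAJ [0] ↔ y.count 0 + 2 = y.count 1 := by
  rw [Set.mem_sdiff, mem_rightQuotient_LMAJ_zero_iff]
  simp only [LMAJ, Set.mem_ofPred_eq, List.count_cons_self, List.count_cons_of_ne zero_ne_one,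
    List.head?_cons, Option.some.injEq, zero_ne_one, and_false, or_false]
  omega

theorem cons_one_mem_LMAJ_diff_iff (y : List (Fin 2)) :
    1 :: y ∈ LMAJ \ rightQuotient LMAJ [0] ↔ y.count 0 = y.count 1 + 1 := by
  rw [Set.mem_sdiff, mem_rightQuotient_LMAJ_zero_iff]
  simp only [LMAJ, Set.mem_ofPred_eq, List.count_cons_self, List.count_cons_of_ne one_ne_zero,
    List.head?_cons, and_true]
  omega

theorem countFn_LMAJ_diff_odd (i : ℕ) :
    countFn (LMAJ \ rightQuotient LMAJ [0]) (2 * i + 1) = (2 * i).choose (i + 1) := by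
  have h0 : countFn {y | 0 :: y ∈ LMAJ \ rightQuotient LMAJ [0]} (2 * i)
      = countFn {y : List (Fin 2) | y.count 1 = i + 1} (2 * i) :=
    countFn_congr fun y hy => by
      rw [Set.mem_ofPred_eq, Set.mem_ofPred_eq, cons_zero_mem_LMAJ_diff_iff]
      have := y.count_zero_add_count_one
      omega
  have h1 : countFn {y | 1 :: y ∈ LMAJ \ rightQuotient LMAJ [0]} (2 * i) = 0 :=
    countFn_eq_zero fun y hy => by
      rw [Set.mem_ofPred_eq, cons_one_mem_LMAJ_diff_iff]
      have := y.count_zero_add_count_one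
      omega
  rw [countFn_succ, Fin.sum_univ_two, h0, h1, countFn_count_one, add_zero]

theorem countFn_LMAJ_diff_even (i : ℕ) :
    countFn (LMAJ \ rightQuotient LMAJ [0]) (2 * i + 2) = (2 * i + 1).choose i := by
  have h0 : countFn {y | 0 :: y ∈ LMAJ \ rightQuotient LMAJ [0]} (2 * i + 1) = 0 :=
    countFn_eq_zero fun y hy => by
      rw [Set.mem_ofPred_eq, cons_zero_mem_LMAJ_diff_iff]
      have := y.count_zero_add_count_one
      omega
  have h1 : countFn {y | 1 :: y ∈ LMAJ \ rightQuotient LMAJ [0]} (2 * i + 1)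
      = countFn {y : List (Fin 2) | y.count 1 = i} (2 * i + 1) :=
    countFn_congr fun y hy => by
      rw [Set.mem_ofPred_eq, Set.mem_ofPred_eq, cons_one_mem_LMAJ_diff_iff]
      have := y.count_zero_add_count_one
      omega
  rw [countFn_succ, Fin.sum_univ_two, h0, h1, countFn_count_one, zero_add]

theorem countFn_rightQuotient_add_countFn_LMAJ_diff (n : ℕ) :
    countFn (rightQuotient LMAJ [0]) n + countFn (LMAJ \ rightQuotient LMAJ [0]) n
      = countFn LMAJ n := by
  simpa [Set.inter_eq_right.mpr rightQuotient_LMAJ_zero_subset] using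
    countFn_inter_add_countFn_diff LMAJ (rightQuotient LMAJ [0]) n

theorem odd_countFn_rightQuotient_LMAJ_zero_iff {m : ℕ} (hm : 3 ≤ m) :
    Odd (countFn (rightQuotient LMAJ [0]) m) ↔ ((m + 1) / 2).isPowerOfTwo := by
  obtain ⟨i, hi, rfl | rfl⟩ : ∃ i, 1 ≤ i ∧ (m = 2 * i + 1 ∨ m = 2 * i + 2) :=
    ⟨(m - 1) / 2, by omega, by omega⟩
  · have hsplit := countFn_rightQuotient_add_countFn_LMAJ_diff (2 * i + 1)
    have hLMAJ : 2 * countFn LMAJ (2 * i + 1) = 2 ^ (2 * i) * 2 :=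
      (two_mul_countFn_LMAJ (2 * i)).trans (pow_succ 2 (2 * i))
    have hpow : 2 ∣ 2 ^ (2 * i) := dvd_pow_self 2 (by omega)
    have hcentral := Nat.two_dvd_centralBinom_of_one_le hi
    rw [Nat.centralBinom_eq_two_mul_choose] at hcentral
    have hpascal := Nat.choose_succ_succ' (2 * i) i
    have hsymm := Nat.choose_symm_half i
    rw [countFn_LMAJ_diff_odd] at hsplit
    rw [show (2 * i + 1 + 1) / 2 = i + 1 by omega, ← odd_choose_two_mul_add_one_iff,
      Nat.odd_iff, Nat.odd_iff]
    omega
  · have hsplit := countFn_rightQuotient_add_countFn_LMAJ_diff (2 * i + 2)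
    have hLMAJ : 2 * countFn LMAJ (2 * i + 2) = 2 ^ (2 * i) * 2 * 2 := by
      rw [← pow_succ, ← pow_succ]
      exact two_mul_countFn_LMAJ (2 * i + 1)
    rw [countFn_LMAJ_diff_even] at hsplit
    rw [show (2 * i + 2 + 1) / 2 = i + 1 by omega, ← odd_choose_two_mul_add_one_iff,
      Nat.odd_iff, Nat.odd_iff]
    omega

theorem not_countingRegular_rightQuotient_LMAJ_zero :
    ¬ CountingRegular (rightQuotient LMAJ [0]) := by
  rintro ⟨β, _, L, hL, hcount⟩
  obtain ⟨N, p, hp, hper⟩ := hL.exists_countFn_periodic_mod 2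
  have hk : N + p + 1 < 2 ^ (N + p + 1) := Nat.lt_two_pow_self
  have hpow : 2 ^ (N + p + 1 + 1) = 2 ^ (N + p + 1) * 2 := pow_succ 2 _
  set k := N + p + 1
  -- `m + 1 = 2 ^ (k + 1)`, while `(m + 2p + 1) / 2 = 2 ^ k + p` lies strictly between powers of two
  set m := 2 ^ (k + 1) - 1
  have hodd : Odd (countFn (rightQuotient LMAJ [0]) m) :=
    (odd_countFn_rightQuotient_LMAJ_zero_iff (by omega)).2 ⟨k, by omega⟩
  have heven : ¬ Odd (countFn (rightQuotient LMAJ [0]) (m + p + p)) := by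
    rw [odd_countFn_rightQuotient_LMAJ_zero_iff (by omega)]
    exact not_isPowerOfTwo_of_lt_of_lt (k := k) (by omega) (by omega)
  have hmod : (countFn L (m + p + p) : ZMod 2) = countFn L m := by
    rw [hper _ (by omega), hper _ (by omega)]
  rw [hcount, hcount, ZMod.natCast_eq_natCast_iff'] at hmod
  rw [Nat.odd_iff] at hodd heven
  omega

/-- `L_MAJ` and `L_MAJ^R` are counting-regular, but the right quotient `L_MAJ{0}⁻¹` and the
left quotient `{0}⁻¹(L_MAJ^R)` are not: counting-regular languages are not closed under
right or left quotient with a single symbol. -/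
theorem stmt15 :
    CountingRegular LMAJ ∧ CountingRegular LMAJrev ∧
    ¬ CountingRegular {x : List (Fin 2) | x ++ [0] ∈ LMAJ} ∧
    ¬ CountingRegular {x : List (Fin 2) | (0 :: x) ∈ LMAJrev} := by
  rw [LMAJrev_eq_image_reverse]
  exact ⟨countingRegular_LMAJ, countingRegular_image_reverse.2 countingRegular_LMAJ,
    not_countingRegular_rightQuotient_LMAJ_zero,
    (countingRegular_leftQuotient_image_reverse_iff LMAJ [0]).not.2
      not_countingRegular_rightQuotient_LMAJ_zero⟩
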